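/- arXiv:2105.12102 — 2 statements merged into one kernel-verified Lean document; each statement's English description precedes it below -/
import Mathlib

section
/- Let ρ : B_5 → GL_4(ℤ) denote the reduced Burau representation of the 5-strand braid group evaluated at t = -1. Then the characteristic polynomial of ρ(β) for β = σ_{13}σ_{24}σ_{14}σ_{25} (in band-generator notation) equals x^4 - x^3 + x^2 - x + 1. -/
/-- The braid relations for the braid group on 5 strands, with Artin generators
indexed by `Fin 4`. -/
def braidRels5 : Set (FreeGroup (Fin 4)) :=
  {r | (∃ i : Fin 3, r = FreeGroup.of i.castSucc * FreeGroup.of i.succ * FreeGroup.of i.castSucc *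
          (FreeGroup.of i.succ * FreeGroup.of i.castSucc * FreeGroup.of i.succ)⁻¹) ∨
       (∃ i j : Fin 4, (i : ℕ) + 2 ≤ (j : ℕ) ∧
          r = FreeGroup.of i * FreeGroup.of j * (FreeGroup.of j * FreeGroup.of i)⁻¹)}

/-- The braid group `B₅` on 5 strands. -/
def B5 : Type := PresentedGroup braidRels5

noncomputable instance : Group B5 := by unfold B5; infer_instance

/-- The Artin generator `σ_k` of `B₅`, for `1 ≤ k ≤ 4` (and `1` for other indices). -/
noncomputable def artin (k : ℕ) : B5 :=
  if h : k - 1 < 4 then PresentedGroup.of (⟨k - 1, h⟩ : Fin 4) else 1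

/-- The band generator `σ_{ij} = (σ_{j-1} ⋯ σ_{i+1}) σ_i (σ_{j-1} ⋯ σ_{i+1})⁻¹`. -/
noncomputable def band (i j : ℕ) : B5 :=
  (((List.range' (i + 1) (j - i - 1)).reverse.map artin).prod) * artin i *
    (((List.range' (i + 1) (j - i - 1)).reverse.map artin).prod)⁻¹

/-- The reduced Burau matrices of the Artin generators of `B₅` at `t = -1`. -/
def burauNegOne : Fin 4 → Matrix (Fin 4) (Fin 4) ℤ
  | 0 => !![1, 0, 0, 0; 1, 1, 0, 0; 0, 0, 1, 0; 0, 0, 0, 1]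
  | 1 => !![1, -1, 0, 0; 0, 1, 0, 0; 0, 1, 1, 0; 0, 0, 0, 1]
  | 2 => !![1, 0, 0, 0; 0, 1, -1, 0; 0, 0, 1, 0; 0, 0, 1, 1]
  | 3 => !![1, 0, 0, 0; 0, 1, 0, 0; 0, 0, 1, -1; 0, 0, 0, 1]

/-!
Each band generator is a conjugate of an Artin generator, so `ρ(β)` is a product of the given
Burau matrices and of their inverses (the same elementary matrices with the off-diagonal entry
negated). Multiplying out gives an explicit integer matrix, whose characteristic polynomial, the
tenth cyclotomic polynomial, follows by cofactor expansion.
-/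

def burauNegOneInv : Fin 4 → Matrix (Fin 4) (Fin 4) ℤ
  | 0 => !![1, 0, 0, 0; -1, 1, 0, 0; 0, 0, 1, 0; 0, 0, 0, 1]
  | 1 => !![1, 1, 0, 0; 0, 1, 0, 0; 0, -1, 1, 0; 0, 0, 0, 1]
  | 2 => !![1, 0, 0, 0; 0, 1, 1, 0; 0, 0, 1, 0; 0, 0, -1, 1]
  | 3 => !![1, 0, 0, 0; 0, 1, 0, 0; 0, 0, 1, 1; 0, 0, 0, 1]

theorem burauNegOneInv_mul_burauNegOne (i : Fin 4) : burauNegOneInv i * burauNegOne i = 1 := by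
  revert i; decide

theorem artin_of_lt {k : ℕ} (h : k - 1 < 4) : artin k = PresentedGroup.of (⟨k - 1, h⟩ : Fin 4) :=
  dif_pos h

theorem artin_of_not_lt {k : ℕ} (h : ¬k - 1 < 4) : artin k = 1 :=
  dif_neg h

theorem band_product_eq :
    band 1 3 * band 2 4 * band 1 4 * band 2 5 =
      artin 2 * artin 1 * (artin 2)⁻¹ * (artin 3 * artin 2 * (artin 3)⁻¹) *
        (artin 3 * artin 2 * artin 1 * ((artin 2)⁻¹ * (artin 3)⁻¹)) *
        (artin 4 * artin 3 * artin 2 * ((artin 3)⁻¹ * (artin 4)⁻¹)) := by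
  simp [band, List.range']

section

variable {ρ : B5 →* Matrix.GeneralLinearGroup (Fin 4) ℤ}
  (hρ : ∀ i : Fin 4, (ρ (PresentedGroup.of i) : Matrix (Fin 4) (Fin 4) ℤ) = burauNegOne i)
include hρ

theorem coe_map_artin (k : ℕ) :
    (ρ (artin k) : Matrix (Fin 4) (Fin 4) ℤ) =
      if h : k - 1 < 4 then burauNegOne ⟨k - 1, h⟩ else 1 := by
  split_ifs with h
  · rw [artin_of_lt h, hρ]
  · rw [artin_of_not_lt h, map_one, Units.val_one]

theorem coe_map_artin_inv (k : ℕ) :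
    (ρ (artin k)⁻¹ : Matrix (Fin 4) (Fin 4) ℤ) =
      if h : k - 1 < 4 then burauNegOneInv ⟨k - 1, h⟩ else 1 := by
  split_ifs with h
  · rw [map_inv]
    exact Units.inv_eq_of_mul_eq_one_left
      (by rw [artin_of_lt h, hρ]; exact burauNegOneInv_mul_burauNegOne _)
  · rw [artin_of_not_lt h, inv_one, map_one, Units.val_one]

theorem coe_map_band_product :
    (ρ (band 1 3 * band 2 4 * band 1 4 * band 2 5) : Matrix (Fin 4) (Fin 4) ℤ) =
      !![1, -1, 0, -2; -3, 3, 1, 8; 0, 0, 0, 1; 2, -1, -1, -3] := by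
  rw [band_product_eq]
  simp only [map_mul, Units.val_mul, coe_map_artin hρ, coe_map_artin_inv hρ]
  decide

end

open Polynomial in
theorem charpoly_band_product_matrix :
    (!![1, -1, 0, -2; -3, 3, 1, 8; 0, 0, 0, 1; 2, -1, -1, -3] :
        Matrix (Fin 4) (Fin 4) ℤ).charpoly = X ^ 4 - X ^ 3 + X ^ 2 - X + 1 := by
  rw [Matrix.charpoly, Matrix.det_succ_row_zero]
  simp [Fin.sum_univ_succ, Matrix.det_fin_three, Matrix.charmatrix_apply, Fin.succAbove]
  ring

theorem stmt_10 (ρ : B5 →* Matrix.GeneralLinearGroup (Fin 4) ℤ)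
    (hρ : ∀ i : Fin 4,
      ((ρ (PresentedGroup.of i) : Matrix.GeneralLinearGroup (Fin 4) ℤ) :
          Matrix (Fin 4) (Fin 4) ℤ) = burauNegOne i) :
    (((ρ (band 1 3 * band 2 4 * band 1 4 * band 2 5) : Matrix.GeneralLinearGroup (Fin 4) ℤ) :
        Matrix (Fin 4) (Fin 4) ℤ)).charpoly =
      Polynomial.X ^ 4 - Polynomial.X ^ 3 + Polynomial.X ^ 2 - Polynomial.X + 1 := by
  rw [coe_map_band_product hρ]
  exact charpoly_band_product_matrix
end

section
/- The five 5-braids σ_{13}σ_{24}σ_{14}σ_{25}, σ_{13}σ_{24}σ_{35}σ_{14}, σ_{13}σ_{24}σ_{35}σ_{25}, σ_{13}σ_{35}σ_{14}σ_{25}, and σ_{14}σ_{25}σ_{24}σ_{35} are pairwise conjugate in the braid group B_5. -/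
/-!
Number the diagonals {1,3}, {2,4}, {3,5}, {1,4}, {2,5} of a pentagon with vertices 1, …, 5 as
d₀, …, d₄: then i ↦ i + 1 (mod 5) on the vertices sends d_k to d_{k+1}. Conjugation by
δ = σ₄σ₃σ₂σ₁ realises the inverse rotation on the band generators, δ d_{k+1} δ⁻¹ = d_k. Hence the
products d_{k+1} d_{k+2} d_{k+3} d_{k+4} of four cyclically consecutive diagonals are all
conjugate, and each of the five braids is a cyclic permutation of one of these products.
-/

local notation "σ₁" => artin 1
local notation "σ₂" => artin 2
local notation "σ₃" => artin 3
local notation "σ₄" => artin 4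
local notation "δ" => artin 4 * artin 3 * artin 2 * artin 1

lemma isConj_mul_swap {G : Type*} [Group G] (a b : G) : IsConj (a * b) (b * a) :=
  isConj_iff.2 ⟨b, by group⟩

lemma pairwise_isConj_of_forall_isConj {M : Type*} [Monoid M] {l : List M} (c : M)
    (h : ∀ a ∈ l, IsConj a c) : l.Pairwise IsConj :=
  List.pairwise_of_forall_mem_list fun a ha b hb => (h a ha).trans (h b hb).symm

lemma artin_add_one {k : ℕ} (hk : k < 4) : artin (k + 1) = PresentedGroup.of (⟨k, hk⟩ : Fin 4) :=
  dif_pos hk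

lemma artin_braid (i : ℕ) (hi : 1 ≤ i := by norm_num) (hi' : i ≤ 3 := by norm_num) :
    artin i * artin (i + 1) * artin i = artin (i + 1) * artin i * artin (i + 1) := by
  obtain ⟨k, rfl⟩ := Nat.exists_eq_add_of_le' hi
  have h := PresentedGroup.mk_eq_mk_of_mul_inv_mem (rels := braidRels5)
    (Or.inl ⟨⟨k, by omega⟩, rfl⟩)
  rw [map_mul, map_mul, map_mul, map_mul] at h
  rw [artin_add_one (by omega : k < 4), artin_add_one (by omega : k + 1 < 4)]
  exact h

lemma artin_comm (i j : ℕ) (hi : 1 ≤ i := by norm_num) (hij : i + 2 ≤ j := by norm_num)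
    (hj : j ≤ 4 := by norm_num) : artin i * artin j = artin j * artin i := by
  obtain ⟨k, rfl⟩ := Nat.exists_eq_add_of_le' hi
  obtain ⟨l, rfl⟩ := Nat.exists_eq_add_of_le' (by omega : 1 ≤ j)
  have h := PresentedGroup.mk_eq_mk_of_mul_inv_mem (rels := braidRels5)
    (Or.inr ⟨⟨k, by omega⟩, ⟨l, by omega⟩, by simp only; omega, rfl⟩)
  rw [map_mul, map_mul] at h
  rw [artin_add_one (by omega : k < 4), artin_add_one (by omega : l < 4)]
  exact h

lemma semiconjBy_delta_artin (i : ℕ) (hi : 1 ≤ i := by norm_num) (hi' : i ≤ 3 := by norm_num) :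
    SemiconjBy δ (artin (i + 1)) (artin i) := by
  unfold SemiconjBy
  interval_cases i
  · calc δ * σ₂ = σ₄ * σ₃ * (σ₂ * σ₁ * σ₂) := by group
      _ = σ₄ * (σ₃ * σ₁) * σ₂ * σ₁ := by rw [← artin_braid 1]; group
      _ = σ₄ * σ₁ * σ₃ * σ₂ * σ₁ := by rw [← artin_comm 1 3]; group
      _ = σ₁ * δ := by rw [← artin_comm 1 4]; group
  · calc δ * σ₃ = σ₄ * σ₃ * σ₂ * (σ₁ * σ₃) := by group
      _ = σ₄ * (σ₃ * σ₂ * σ₃) * σ₁ := by rw [artin_comm 1 3]; group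
      _ = σ₄ * σ₂ * σ₃ * σ₂ * σ₁ := by rw [← artin_braid 2]; group
      _ = σ₂ * δ := by rw [← artin_comm 2 4]; group
  · calc δ * σ₄ = σ₄ * σ₃ * σ₂ * (σ₁ * σ₄) := by group
      _ = σ₄ * σ₃ * (σ₂ * σ₄) * σ₁ := by rw [artin_comm 1 4]; group
      _ = σ₄ * σ₃ * σ₄ * σ₂ * σ₁ := by rw [artin_comm 2 4]; group
      _ = σ₃ * δ := by rw [← artin_braid 3]; group

lemma band_one_three : band 1 3 = σ₂ * σ₁ * σ₂⁻¹ := by simp [band]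
lemma band_two_four : band 2 4 = σ₃ * σ₂ * σ₃⁻¹ := by simp [band]
lemma band_three_five : band 3 5 = σ₄ * σ₃ * σ₄⁻¹ := by simp [band]
lemma band_one_four : band 1 4 = σ₃ * σ₂ * σ₁ * σ₂⁻¹ * σ₃⁻¹ := by
  simp [band, List.range', mul_assoc]
lemma band_two_five : band 2 5 = σ₄ * σ₃ * σ₂ * σ₃⁻¹ * σ₄⁻¹ := by
  simp [band, List.range', mul_assoc]

noncomputable def diagonal : ZMod 5 → B5 := ![band 1 3, band 2 4, band 3 5, band 1 4, band 2 5]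

lemma semiconjBy_delta_diagonal (k : ZMod 5) : SemiconjBy δ (diagonal (k + 1)) (diagonal k) := by
  have h₁ := semiconjBy_delta_artin 1
  have h₂ := semiconjBy_delta_artin 2
  have h₃ := semiconjBy_delta_artin 3
  fin_cases k
  · show SemiconjBy δ (band 2 4) (band 1 3)
    rw [band_two_four, band_one_three]
    exact (h₂.mul_right h₁).mul_right h₂.inv_right
  · show SemiconjBy δ (band 3 5) (band 2 4)
    rw [band_three_five, band_two_four]
    exact (h₃.mul_right h₂).mul_right h₃.inv_right
  · show SemiconjBy δ (band 1 4) (band 3 5)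
    rw [band_one_four, band_three_five]
    unfold SemiconjBy
    calc δ * (σ₃ * σ₂ * σ₁ * σ₂⁻¹ * σ₃⁻¹) = σ₄ * σ₃ * σ₂ * (σ₁ * σ₃) * σ₂ * σ₁ * σ₂⁻¹ * σ₃⁻¹ := by
          group
      _ = σ₄ * σ₃ * σ₂ * σ₃ * (σ₁ * σ₂ * σ₁) * σ₂⁻¹ * σ₃⁻¹ := by rw [artin_comm 1 3]; group
      _ = σ₄ * σ₃ * (σ₂ * σ₃ * σ₂) * σ₁ * σ₃⁻¹ := by rw [artin_braid 1]; group
      _ = σ₄ * σ₃ * σ₃ * σ₂ * (σ₃ * σ₁) * σ₃⁻¹ := by rw [artin_braid 2]; group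
      _ = σ₄ * σ₃ * σ₄⁻¹ * δ := by rw [← artin_comm 1 3]; group
  · show SemiconjBy δ (band 2 5) (band 1 4)
    rw [band_two_five, band_one_four]
    exact ((((h₃.mul_right h₂).mul_right h₁).mul_right h₂.inv_right).mul_right h₃.inv_right)
  · show SemiconjBy δ (band 1 3) (band 2 5)
    rw [band_one_three, band_two_five]
    unfold SemiconjBy
    calc δ * (σ₂ * σ₁ * σ₂⁻¹) = σ₄ * σ₃ * σ₂ * (σ₁ * σ₂ * σ₁) * σ₂⁻¹ := by group
      _ = σ₄ * σ₃ * σ₂ * σ₃⁻¹ * σ₄⁻¹ * δ := by rw [artin_braid 1]; group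

noncomputable def diagonalProd (k : ZMod 5) : B5 :=
  diagonal (k + 1) * diagonal (k + 2) * diagonal (k + 3) * diagonal (k + 4)

lemma semiconjBy_delta_diagonalProd (k : ZMod 5) :
    SemiconjBy δ (diagonalProd (k + 1)) (diagonalProd k) := by
  have h := ((semiconjBy_delta_diagonal (k + 1)).mul_right (semiconjBy_delta_diagonal (k + 2))
    |>.mul_right (semiconjBy_delta_diagonal (k + 3))).mul_right (semiconjBy_delta_diagonal (k + 4))
  rw [diagonalProd, diagonalProd, add_right_comm k 1 2, add_right_comm k 1 3, add_right_comm k 1 4]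
  exact h

lemma isConj_diagonalProd (k l : ZMod 5) : IsConj (diagonalProd k) (diagonalProd l) := by
  have hn (n : ℕ) : IsConj (diagonalProd 0) (diagonalProd n) := by
    induction n with
    | zero => exact IsConj.refl _
    | succ n ih =>
      have h := semiconjBy_delta_diagonalProd n
      rw [← Nat.cast_succ] at h
      exact ih.trans (isConj_iff.2 ⟨δ, mul_inv_eq_of_eq_mul h⟩).symm
  rw [← ZMod.natCast_zmod_val k, ← ZMod.natCast_zmod_val l]
  exact (hn k.val).symm.trans (hn l.val)

theorem stmt_11 :
    List.Pairwise IsConj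
      [band 1 3 * band 2 4 * band 1 4 * band 2 5,
       band 1 3 * band 2 4 * band 3 5 * band 1 4,
       band 1 3 * band 2 4 * band 3 5 * band 2 5,
       band 1 3 * band 3 5 * band 1 4 * band 2 5,
       band 1 4 * band 2 5 * band 2 4 * band 3 5] := by
  refine pairwise_isConj_of_forall_isConj (diagonalProd 0) ?_
  simp only [List.mem_cons, List.not_mem_nil, or_false]
  rintro w (rfl | rfl | rfl | rfl | rfl)
  · refine .trans ?_ (isConj_diagonalProd 2 0)
    show IsConj _ (band 1 4 * band 2 5 * band 1 3 * band 2 4)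
    simpa only [mul_assoc] using isConj_mul_swap (band 1 3 * band 2 4) (band 1 4 * band 2 5)
  · exact isConj_diagonalProd 4 0
  · refine .trans ?_ (isConj_diagonalProd 3 0)
    show IsConj _ (band 2 5 * band 1 3 * band 2 4 * band 3 5)
    simpa only [mul_assoc] using isConj_mul_swap (band 1 3 * band 2 4 * band 3 5) (band 2 5)
  · refine .trans ?_ (isConj_diagonalProd 1 0)
    show IsConj _ (band 3 5 * band 1 4 * band 2 5 * band 1 3)
    simpa only [mul_assoc] using isConj_mul_swap (band 1 3) (band 3 5 * band 1 4 * band 2 5)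
  · refine .trans ?_ (isConj_diagonalProd 0 0)
    show IsConj _ (band 2 4 * band 3 5 * band 1 4 * band 2 5)
    simpa only [mul_assoc] using isConj_mul_swap (band 1 4 * band 2 5) (band 2 4 * band 3 5)
end
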